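/- arXiv:1904.07768 — 4 statements merged into one kernel-verified Lean document; each statement's English description precedes it below -/
import Mathlib

section
/- Let C and D be finite persistence diagrams with n points each, indexed so that points with matching indices are paired under an optimal bottleneck matching. Let ψ be any real-valued function on diagram points, ψᵢ^C = ψ(bᵢ^C, dᵢ^C), ψᵢ^D = ψ(bᵢ^D, dᵢ^D), L^C = Σᵢ (dᵢ^C − bᵢ^C), L^D = Σᵢ (dᵢ^D − bᵢ^D), Ψ^C = Σᵢ ψᵢ^C, Ψ^D = Σᵢ ψᵢ^D (assume all ψᵢ ≥ 0). Then the persistence curves P(C,ψ,Σ)(t) = Σᵢ ψᵢ^C · 1_{[bᵢ^C, dᵢ^C)}(t) and P(D,ψ,Σ)(t) analogously satisfy ‖P(C,ψ,Σ) − P(D,ψ,Σ)‖₁ ≤ min{ L^C · maxᵢ|ψᵢ^C − ψᵢ^D| + 2Ψ^D·W∞(C,D), L^D · maxᵢ|ψᵢ^C − ψᵢ^D| + 2Ψ^C·W∞(C,D) }. -/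
open MeasureTheory Set Finset


lemma aux_int_ind (a b : ℝ) : Integrable ((Set.Ico a b).indicator (1 : ℝ → ℝ)) := by
  rw [integrable_indicator_iff measurableSet_Ico]
  exact integrableOn_const measure_Ico_lt_top.ne

lemma aux_int_ind_val (a b : ℝ) (h : a ≤ b) :
    ∫ t, (Set.Ico a b).indicator (1 : ℝ → ℝ) t = b - a := by
  rw [MeasureTheory.integral_indicator measurableSet_Ico]
  simp [Real.volume_Ico, ENNReal.toReal_ofReal (sub_nonneg.2 h), h]

set_option linter.unreachableTactic false in
set_option linter.unusedTactic false in
lemma aux_ind_abs (a b c d t : ℝ) :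
    |(Set.Ico a b).indicator (1 : ℝ → ℝ) t - (Set.Ico c d).indicator 1 t| ≤
      (Set.Ico (min a c) (max a c)).indicator 1 t +
      (Set.Ico (min b d) (max b d)).indicator 1 t := by
  simp only [Set.indicator_apply, Set.mem_Ico, Pi.one_apply, min_le_iff, lt_max_iff]
  split_ifs <;> simp_all <;> constructor <;> first | tauto | (intro h; push_neg at * ; constructor <;> intro <;> linarith)

lemma key_bound (n : ℕ) (bC dC bD dD ψC ψD : Fin n → ℝ)
    (hCbd : ∀ i, bC i ≤ dC i)
    (hψD : ∀ i, 0 ≤ ψD i)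
    (W : ℝ)
    (hb : ∀ i, |bC i - bD i| ≤ W) (hd : ∀ i, |dC i - dD i| ≤ W)
    (M : ℝ) (hM : ∀ i, |ψC i - ψD i| ≤ M) :
    (∫ t : ℝ, |(∑ i, ψC i * (Set.Ico (bC i) (dC i)).indicator 1 t) -
        ∑ i, ψD i * (Set.Ico (bD i) (dD i)).indicator 1 t|) ≤
      (∑ i, (dC i - bC i)) * M + 2 * (∑ i, ψD i) * W := by
  have hsum2 : ∀ i : Fin n, Integrable (fun t : ℝ =>
      (Set.Ico (min (bC i) (bD i)) (max (bC i) (bD i))).indicator 1 t +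
        (Set.Ico (min (dC i) (dD i)) (max (dC i) (dD i))).indicator 1 t) :=
    fun i => ((aux_int_ind (min (bC i) (bD i)) (max (bC i) (bD i))).add (aux_int_ind (min (dC i) (dD i)) (max (dC i) (dD i)))).congr (Filter.Eventually.of_forall fun x => rfl)
  have hmul1 : ∀ i : Fin n, Integrable (fun t : ℝ =>
      |ψC i - ψD i| * (Set.Ico (bC i) (dC i)).indicator 1 t) :=
    fun i => (aux_int_ind _ _).const_mul _
  have hmul2 : ∀ i : Fin n, Integrable (fun t : ℝ =>
      ψD i * ((Set.Ico (min (bC i) (bD i)) (max (bC i) (bD i))).indicator 1 t +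
        (Set.Ico (min (dC i) (dD i)) (max (dC i) (dD i))).indicator 1 t)) :=
    fun i => (hsum2 i).const_mul _
  have hint : ∀ i : Fin n, Integrable (fun t : ℝ =>
      |ψC i - ψD i| * (Set.Ico (bC i) (dC i)).indicator 1 t +
      ψD i * ((Set.Ico (min (bC i) (bD i)) (max (bC i) (bD i))).indicator 1 t +
        (Set.Ico (min (dC i) (dD i)) (max (dC i) (dD i))).indicator 1 t)) :=
    fun i => (hmul1 i).add (hmul2 i)
  set g : ℝ → ℝ := fun t => ∑ i,
    (|ψC i - ψD i| * (Set.Ico (bC i) (dC i)).indicator 1 t +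
      ψD i * ((Set.Ico (min (bC i) (bD i)) (max (bC i) (bD i))).indicator 1 t +
        (Set.Ico (min (dC i) (dD i)) (max (dC i) (dD i))).indicator 1 t)) with hg
  have hgint : Integrable g := by
    rw [hg]; exact integrable_finset_sum _ (fun i _ => hint i)
  have hptwise : ∀ t : ℝ, |(∑ i, ψC i * (Set.Ico (bC i) (dC i)).indicator 1 t) -
      ∑ i, ψD i * (Set.Ico (bD i) (dD i)).indicator 1 t| ≤ g t := by
    intro t
    rw [← Finset.sum_sub_distrib]
    refine (Finset.abs_sum_le_sum_abs _ _).trans ?_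
    refine Finset.sum_le_sum fun i _ => ?_
    have e1 : ψC i * (Set.Ico (bC i) (dC i)).indicator 1 t -
        ψD i * (Set.Ico (bD i) (dD i)).indicator 1 t =
        (ψC i - ψD i) * (Set.Ico (bC i) (dC i)).indicator 1 t +
        ψD i * ((Set.Ico (bC i) (dC i)).indicator 1 t -
          (Set.Ico (bD i) (dD i)).indicator 1 t) := by ring
    rw [e1]
    refine (abs_add_le _ _).trans ?_
    rw [abs_mul, abs_mul, abs_of_nonneg (hψD i),
      abs_of_nonneg (Set.indicator_nonneg (by intro x _; norm_num) t)]
    have := mul_le_mul_of_nonneg_left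
      (aux_ind_abs (bC i) (dC i) (bD i) (dD i) t) (hψD i)
    linarith
  have hintval : ∫ t, g t = ∑ i,
      (|ψC i - ψD i| * (dC i - bC i) +
        ψD i * (|bC i - bD i| + |dC i - dD i|)) := by
    rw [hg, integral_finset_sum _ (fun i _ => hint i)]
    refine Finset.sum_congr rfl fun i _ => ?_
    rw [integral_add (hmul1 i) (hmul2 i), integral_const_mul, integral_const_mul,
      integral_add (aux_int_ind _ _) (aux_int_ind _ _),
      aux_int_ind_val _ _ (hCbd i),
      aux_int_ind_val _ _ min_le_max, aux_int_ind_val _ _ min_le_max,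
      max_sub_min_eq_abs, max_sub_min_eq_abs, abs_sub_comm (bD i) (bC i),
      abs_sub_comm (dD i) (dC i)]
  have step1 : (∫ t : ℝ, |(∑ i, ψC i * (Set.Ico (bC i) (dC i)).indicator 1 t) -
      ∑ i, ψD i * (Set.Ico (bD i) (dD i)).indicator 1 t|) ≤ ∫ t, g t :=
    integral_mono_of_nonneg (Filter.Eventually.of_forall fun t => abs_nonneg _) hgint
      (Filter.Eventually.of_forall hptwise)
  refine step1.trans ?_
  rw [hintval]
  have hterm : ∀ i : Fin n, |ψC i - ψD i| * (dC i - bC i) +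
      ψD i * (|bC i - bD i| + |dC i - dD i|) ≤
      (dC i - bC i) * M + ψD i * (2 * W) := by
    intro i
    have A : |ψC i - ψD i| * (dC i - bC i) ≤ M * (dC i - bC i) :=
      mul_le_mul_of_nonneg_right (hM i) (sub_nonneg.2 (hCbd i))
    have B : ψD i * (|bC i - bD i| + |dC i - dD i|) ≤ ψD i * (2 * W) :=
      mul_le_mul_of_nonneg_left (by linarith [hb i, hd i]) (hψD i)
    calc |ψC i - ψD i| * (dC i - bC i) + ψD i * (|bC i - bD i| + |dC i - dD i|)
        ≤ M * (dC i - bC i) + ψD i * (2 * W) := add_le_add A B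
      _ = (dC i - bC i) * M + ψD i * (2 * W) := by ring
  refine (Finset.sum_le_sum fun i _ => hterm i).trans_eq ?_
  rw [Finset.sum_add_distrib, ← Finset.sum_mul, ← Finset.sum_mul]
  ring

/-- General bound for persistence curves. -/
theorem persistence_curve_general_bound (n : ℕ) (hn : 0 < n)
    (bC dC bD dD ψC ψD : Fin n → ℝ)
    (hCbd : ∀ i, bC i ≤ dC i) (hDbd : ∀ i, bD i ≤ dD i)
    (hψC : ∀ i, 0 ≤ ψC i) (hψD : ∀ i, 0 ≤ ψD i)
    (W : ℝ)  -- the bottleneck distance `W∞(C, D)`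
    (hmatch : ∀ i, max |bC i - bD i| |dC i - dD i| ≤ W)
    (PC PD : ℝ → ℝ)
    (hPC : PC = fun t => ∑ i, ψC i * (Set.Ico (bC i) (dC i)).indicator 1 t)
    (hPD : PD = fun t => ∑ i, ψD i * (Set.Ico (bD i) (dD i)).indicator 1 t)
    (LC LD ΨC ΨD M : ℝ)
    (hLC : LC = ∑ i, (dC i - bC i)) (hLD : LD = ∑ i, (dD i - bD i))
    (hΨC : ΨC = ∑ i, ψC i) (hΨD : ΨD = ∑ i, ψD i)
    (hM : M = Finset.univ.sup' ⟨⟨0, hn⟩, Finset.mem_univ _⟩ fun i => |ψC i - ψD i|) :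
    (∫ t : ℝ, |PC t - PD t|) ≤
      min (LC * M + 2 * ΨD * W) (LD * M + 2 * ΨC * W) := by
  subst hPC hPD hLC hLD hΨC hΨD
  have hM' : ∀ i, |ψC i - ψD i| ≤ M := by
    intro i; rw [hM]; exact Finset.le_sup' (fun j => |ψC j - ψD j|) (Finset.mem_univ i)
  have hM'' : ∀ i, |ψD i - ψC i| ≤ M := by
    intro i; rw [abs_sub_comm]; exact hM' i
  have hb : ∀ i, |bC i - bD i| ≤ W := fun i => (le_max_left _ _).trans (hmatch i)
  have hd : ∀ i, |dC i - dD i| ≤ W := fun i => (le_max_right _ _).trans (hmatch i)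
  have hb' : ∀ i, |bD i - bC i| ≤ W := fun i => by rw [abs_sub_comm]; exact hb i
  have hd' : ∀ i, |dD i - dC i| ≤ W := fun i => by rw [abs_sub_comm]; exact hd i
  refine le_min ?_ ?_
  · exact key_bound n bC dC bD dD ψC ψD hCbd hψD W hb hd M hM'
  · have h2 := key_bound n bD dD bC dC ψD ψC hDbd hψC W hb' hd' M hM''
    have heq : (fun t : ℝ => |(∑ i, ψC i * (Set.Ico (bC i) (dC i)).indicator 1 t) -
        ∑ i, ψD i * (Set.Ico (bD i) (dD i)).indicator 1 t|) =
        fun t : ℝ => |(∑ i, ψD i * (Set.Ico (bD i) (dD i)).indicator 1 t) -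
        ∑ i, ψC i * (Set.Ico (bC i) (dC i)).indicator 1 t| :=
      funext fun t => abs_sub_comm _ _
    calc (∫ t : ℝ, |(∑ i, ψC i * (Set.Ico (bC i) (dC i)).indicator 1 t) -
          ∑ i, ψD i * (Set.Ico (bD i) (dD i)).indicator 1 t|)
        = ∫ t : ℝ, |(∑ i, ψD i * (Set.Ico (bD i) (dD i)).indicator 1 t) -
          ∑ i, ψC i * (Set.Ico (bC i) (dC i)).indicator 1 t| := by rw [heq]
      _ ≤ _ := h2
end

section
/- Under the hypotheses of the general persistence-curve bound, if additionally ψ is a stable measurement, i.e. maxᵢ |ψᵢ^C − ψᵢ^D| ≤ K·W∞(C,D) for a constant K ≥ 0, then ‖P(C,ψ,Σ) − P(D,ψ,Σ)‖₁ ≤ K̃·W∞(C,D) with K̃ = min{K·L^C + 2Ψ^D, K·L^D + 2Ψ^C}, so the persistence curve is Lipschitz in the bottleneck distance. -/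
open MeasureTheory Set Finset

section PCAux

open MeasureTheory Set

private lemma pc_ind_integrable (a b : ℝ) : Integrable ((Ico a b).indicator (1:ℝ→ℝ)) := by
  rw [integrable_indicator_iff measurableSet_Ico]
  exact integrableOn_const measure_Ico_lt_top.ne

private lemma pc_ind_int (a b : ℝ) (h : a ≤ b) :
    ∫ t, (Ico a b).indicator (1:ℝ→ℝ) t = b - a := by
  rw [MeasureTheory.integral_indicator measurableSet_Ico]
  simp [Real.volume_Ico, ENNReal.toReal_ofReal (by linarith : (0:ℝ) ≤ b - a), h]

private lemma pc_ind_diff_le (b d b' d' t : ℝ) :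
    |(Ico b d).indicator (1:ℝ→ℝ) t - (Ico b' d').indicator 1 t| ≤
      (Ico (min b b') (max b b')).indicator 1 t +
      (Ico (min d d') (max d d')).indicator 1 t := by
  simp only [Set.indicator, Set.mem_Ico, Pi.one_apply, min_le_iff, lt_max_iff, le_max_iff]
  split_ifs <;> (try push_neg at *) <;> simp_all <;>
    first
    | (constructor <;> intro h' <;> rcases h' with h'|h' <;> intro hh <;>
        rcases hh with hh|hh <;> linarith)
    | (cases ‹_ ∧ _›; linarith)
    | norm_num

private lemma pc_ind_nonneg (a b t : ℝ) : 0 ≤ (Ico a b).indicator (1:ℝ→ℝ) t :=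
  Set.indicator_nonneg (fun _ _ => zero_le_one) t

private lemma pc_key (ψ ψ' b d b' d' : ℝ) (hbd : b ≤ d) (hψ' : 0 ≤ ψ') :
    ∫ t, |ψ * (Ico b d).indicator 1 t - ψ' * (Ico b' d').indicator 1 t| ≤
      |ψ - ψ'| * (d - b) + ψ' * (|b - b'| + |d - d'|) := by
  have hBin : Integrable (fun t => (Ico (min b b') (max b b')).indicator (1:ℝ→ℝ) t +
      (Ico (min d d') (max d d')).indicator 1 t) :=
    (pc_ind_integrable _ _).add (pc_ind_integrable _ _)
  have hA : Integrable (fun t => |ψ - ψ'| * (Ico b d).indicator (1:ℝ→ℝ) t) :=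
    (pc_ind_integrable b d).const_mul _
  have hB : Integrable (fun t => ψ' * ((Ico (min b b') (max b b')).indicator (1:ℝ→ℝ) t +
      (Ico (min d d') (max d d')).indicator 1 t)) := hBin.const_mul _
  have hpt : ∀ t, |ψ * (Ico b d).indicator 1 t - ψ' * (Ico b' d').indicator 1 t| ≤
      |ψ - ψ'| * (Ico b d).indicator (1:ℝ→ℝ) t +
      ψ' * ((Ico (min b b') (max b b')).indicator 1 t +
        (Ico (min d d') (max d d')).indicator 1 t) := by
    intro t
    have h1 : ψ * (Ico b d).indicator 1 t - ψ' * (Ico b' d').indicator 1 t =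
        (ψ - ψ') * (Ico b d).indicator 1 t +
        ψ' * ((Ico b d).indicator 1 t - (Ico b' d').indicator 1 t) := by ring
    rw [h1]
    refine (abs_add_le _ _).trans ?_
    rw [abs_mul, abs_mul, abs_of_nonneg (pc_ind_nonneg b d t), abs_of_nonneg hψ']
    gcongr
    exact pc_ind_diff_le b d b' d' t
  calc ∫ t, |ψ * (Ico b d).indicator 1 t - ψ' * (Ico b' d').indicator 1 t|
      ≤ ∫ t, (|ψ - ψ'| * (Ico b d).indicator (1:ℝ→ℝ) t +
        ψ' * ((Ico (min b b') (max b b')).indicator 1 t +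
          (Ico (min d d') (max d d')).indicator 1 t)) :=
        integral_mono_of_nonneg (Filter.Eventually.of_forall fun t => abs_nonneg _)
          (hA.add hB) (Filter.Eventually.of_forall hpt)
    _ = |ψ - ψ'| * (d - b) + ψ' * ((max b b' - min b b') + (max d d' - min d d')) := by
        rw [integral_add hA hB, integral_const_mul, integral_const_mul,
          integral_add (pc_ind_integrable _ _) (pc_ind_integrable _ _),
          pc_ind_int _ _ hbd, pc_ind_int _ _ (min_le_max), pc_ind_int _ _ (min_le_max)]
    _ = |ψ - ψ'| * (d - b) + ψ' * (|b - b'| + |d - d'|) := by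
        rw [max_sub_min_eq_abs, max_sub_min_eq_abs, abs_sub_comm b' b, abs_sub_comm d' d]

end PCAux

/-- Stability corollary for persistence curves: under the hypotheses of the
general persistence-curve bound, if `ψ` is a stable measurement, i.e.
`maxᵢ |ψᵢ^C − ψᵢ^D| ≤ K·W∞(C,D)` with `K ≥ 0`, then
`‖P(C,ψ,Σ) − P(D,ψ,Σ)‖₁ ≤ K̃·W∞(C,D)` with
`K̃ = min{K·L^C + 2Ψ^D, K·L^D + 2Ψ^C}`. -/
theorem persistence_curve_stability (n : ℕ) (hn : 0 < n)
    (bC dC bD dD ψC ψD : Fin n → ℝ)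
    (hCbd : ∀ i, bC i ≤ dC i) (hDbd : ∀ i, bD i ≤ dD i)
    (hψC : ∀ i, 0 ≤ ψC i) (hψD : ∀ i, 0 ≤ ψD i)
    (W : ℝ) (hW : 0 ≤ W)  -- the bottleneck distance `W∞(C, D)`
    (hmatch : ∀ i, max |bC i - bD i| |dC i - dD i| ≤ W)
    (K : ℝ) (hK : 0 ≤ K)
    (hstable :
      (Finset.univ.sup' ⟨⟨0, hn⟩, Finset.mem_univ _⟩ fun i => |ψC i - ψD i|) ≤ K * W)
    (PC PD : ℝ → ℝ)
    (hPC : PC = fun t => ∑ i, ψC i * (Set.Ico (bC i) (dC i)).indicator 1 t)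
    (hPD : PD = fun t => ∑ i, ψD i * (Set.Ico (bD i) (dD i)).indicator 1 t)
    (LC LD ΨC ΨD : ℝ)
    (hLC : LC = ∑ i, (dC i - bC i)) (hLD : LD = ∑ i, (dD i - bD i))
    (hΨC : ΨC = ∑ i, ψC i) (hΨD : ΨD = ∑ i, ψD i) :
    (∫ t : ℝ, |PC t - PD t|) ≤
      min (K * LC + 2 * ΨD) (K * LD + 2 * ΨC) * W := by
  subst hPC hPD hLC hLD hΨC hΨD
  -- abbreviations
  have hψ : ∀ i : Fin n, |ψC i - ψD i| ≤ K * W := fun i =>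
    le_trans (Finset.le_sup' (fun i => |ψC i - ψD i|) (Finset.mem_univ i)) hstable
  have hb : ∀ i : Fin n, |bC i - bD i| ≤ W := fun i =>
    le_trans (le_max_left _ _) (hmatch i)
  have hd : ∀ i : Fin n, |dC i - dD i| ≤ W := fun i =>
    le_trans (le_max_right _ _) (hmatch i)
  -- integrability of each |term|
  have hInt : ∀ i : Fin n, Integrable (fun t =>
      |ψC i * (Set.Ico (bC i) (dC i)).indicator 1 t -
        ψD i * (Set.Ico (bD i) (dD i)).indicator 1 t|) := fun i =>
    (((pc_ind_integrable _ _).const_mul _).sub ((pc_ind_integrable _ _).const_mul _)).abs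
  have hSumInt : Integrable (fun t => ∑ i : Fin n,
      |ψC i * (Set.Ico (bC i) (dC i)).indicator 1 t -
        ψD i * (Set.Ico (bD i) (dD i)).indicator 1 t|) :=
    integrable_finset_sum _ fun i _ => hInt i
  -- step 1: the integral is at most the sum of the per-point integrals
  have step1 : (∫ t : ℝ, |(∑ i, ψC i * (Set.Ico (bC i) (dC i)).indicator 1 t) -
        ∑ i, ψD i * (Set.Ico (bD i) (dD i)).indicator 1 t|) ≤
      ∑ i : Fin n, ∫ t : ℝ,
        |ψC i * (Set.Ico (bC i) (dC i)).indicator 1 t -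
          ψD i * (Set.Ico (bD i) (dD i)).indicator 1 t| := by
    rw [← integral_finset_sum _ fun i _ => hInt i]
    refine integral_mono_of_nonneg (Filter.Eventually.of_forall fun t => abs_nonneg _)
      hSumInt (Filter.Eventually.of_forall fun t => ?_)
    dsimp only
    rw [← Finset.sum_sub_distrib]
    exact Finset.abs_sum_le_sum_abs _ _
  rw [min_mul_of_nonneg _ _ hW]
  refine le_trans step1 (le_min ?_ ?_)
  · -- bound by (K * LC + 2 * ΨD) * W
    have : ∀ i : Fin n, (∫ t : ℝ,
        |ψC i * (Set.Ico (bC i) (dC i)).indicator 1 t -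
          ψD i * (Set.Ico (bD i) (dD i)).indicator 1 t|) ≤
        K * W * (dC i - bC i) + ψD i * (2 * W) := by
      intro i
      refine le_trans (pc_key _ _ _ _ _ _ (hCbd i) (hψD i)) ?_
      have h1 : |ψC i - ψD i| * (dC i - bC i) ≤ K * W * (dC i - bC i) :=
        mul_le_mul_of_nonneg_right (hψ i) (by linarith [hCbd i])
      have h2 : ψD i * (|bC i - bD i| + |dC i - dD i|) ≤ ψD i * (2 * W) :=
        mul_le_mul_of_nonneg_left (by linarith [hb i, hd i]) (hψD i)
      linarith
    refine le_trans (Finset.sum_le_sum fun i _ => this i) ?_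
    rw [Finset.sum_add_distrib, ← Finset.mul_sum, ← Finset.sum_mul]
    apply le_of_eq; ring
  · -- bound by (K * LD + 2 * ΨC) * W
    have : ∀ i : Fin n, (∫ t : ℝ,
        |ψC i * (Set.Ico (bC i) (dC i)).indicator 1 t -
          ψD i * (Set.Ico (bD i) (dD i)).indicator 1 t|) ≤
        K * W * (dD i - bD i) + ψC i * (2 * W) := by
      intro i
      have hsymm : (∫ t : ℝ,
          |ψC i * (Set.Ico (bC i) (dC i)).indicator 1 t -
            ψD i * (Set.Ico (bD i) (dD i)).indicator 1 t|) =
          ∫ t : ℝ, |ψD i * (Set.Ico (bD i) (dD i)).indicator 1 t -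
            ψC i * (Set.Ico (bC i) (dC i)).indicator 1 t| := by
        congr 1; funext t; rw [abs_sub_comm]
      rw [hsymm]
      refine le_trans (pc_key _ _ _ _ _ _ (hDbd i) (hψC i)) ?_
      have h1 : |ψD i - ψC i| * (dD i - bD i) ≤ K * W * (dD i - bD i) := by
        rw [abs_sub_comm]
        exact mul_le_mul_of_nonneg_right (hψ i) (by linarith [hDbd i])
      have h2 : ψC i * (|bD i - bC i| + |dD i - dC i|) ≤ ψC i * (2 * W) := by
        rw [abs_sub_comm (bD i), abs_sub_comm (dD i)]
        exact mul_le_mul_of_nonneg_left (by linarith [hb i, hd i]) (hψC i)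
      linarith
    refine le_trans (Finset.sum_le_sum fun i _ => this i) ?_
    rw [Finset.sum_add_distrib, ← Finset.mul_sum, ← Finset.sum_mul]
    apply le_of_eq; ring
end

section
/- Let C and D be finite persistence diagrams indexed by an optimal bottleneck matching, and suppose every point of C and D has birth b ≥ 1. With ψ(b,d) = d/b (multiplicative life), one has maxᵢ |ψᵢ^C − ψᵢ^D| ≤ (1 + M)·W∞(C,D), where M = maxᵢ max{dᵢ^C, dᵢ^D}. -/
theorem abs_div_sub_div_le_of_one_le {K : Type*} [Field K] [LinearOrder K] [IsStrictOrderedRing K]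
    {a b c d : K} (hb : 1 ≤ b) (hd : 1 ≤ d) (hc : 0 ≤ c) :
    |a / b - c / d| ≤ |a - c| + c * |b - d| := by
  have hb0 : 0 < b := zero_lt_one.trans_le hb
  have hd0 : 0 < d := zero_lt_one.trans_le hd
  have hsplit : a / b - c / d = (a - c) / b + c * (d - b) / (b * d) := by
    field_simp
    ring
  calc |a / b - c / d| ≤ |(a - c) / b| + |c * (d - b) / (b * d)| := by
        rw [hsplit]; exact abs_add_le _ _
    _ = |a - c| / b + c * |b - d| / (b * d) := by
        rw [abs_div, abs_div, abs_mul, abs_of_pos hb0, abs_of_pos (mul_pos hb0 hd0),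
          abs_of_nonneg hc, abs_sub_comm d b]
    _ ≤ |a - c| + c * |b - d| := by
        gcongr
        · exact div_le_self (abs_nonneg _) hb
        · exact div_le_self (by positivity) (one_le_mul_of_one_le_of_one_le hb hd)

theorem multiplicative_life_stability_general (n : ℕ) (hn : 0 < n)
    (bC dC bD dD : Fin n → ℝ)
    (hbC : ∀ i, 1 ≤ bC i) (hbD : ∀ i, 1 ≤ bD i)
    (hDbd : ∀ i, bD i ≤ dD i)
    (W : ℝ)  -- the bottleneck distance `W∞(C, D)`
    (hmatch : ∀ i, max |bC i - bD i| |dC i - dD i| ≤ W)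
    (M : ℝ)
    (hM : M = Finset.univ.sup' ⟨⟨0, hn⟩, Finset.mem_univ _⟩ fun i => max (dC i) (dD i)) :
    (Finset.univ.sup' ⟨⟨0, hn⟩, Finset.mem_univ _⟩ fun i =>
        |dC i / bC i - dD i / bD i|) ≤ (1 + M) * W := by
  refine Finset.sup'_le _ _ fun i _ => ?_
  have hdD : 0 ≤ dD i := zero_le_one.trans ((hbD i).trans (hDbd i))
  have hdM : dD i ≤ M := by
    rw [hM]
    exact (le_max_right _ _).trans (Finset.le_sup' (fun i => max (dC i) (dD i)) (Finset.mem_univ i))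
  obtain ⟨hWb, hWd⟩ := max_le_iff.mp (hmatch i)
  calc |dC i / bC i - dD i / bD i| ≤ |dC i - dD i| + dD i * |bC i - bD i| :=
        abs_div_sub_div_le_of_one_le (hbC i) (hbD i) hdD
    _ ≤ W + M * W := by gcongr; exact hdD.trans hdM
    _ = (1 + M) * W := by ring

/-- With births at least `1` and `ψ(b,d) = d/b` (multiplicative life),
`maxᵢ |ψᵢ^C − ψᵢ^D| ≤ (1 + M)·W∞(C,D)` where
`M = maxᵢ max{dᵢ^C, dᵢ^D}`, for diagrams indexed by an optimal bottleneck
matching with cost `W`. -/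
theorem multiplicative_life_stability (n : ℕ) (hn : 0 < n)
    (bC dC bD dD : Fin n → ℝ)
    (hbC : ∀ i, 1 ≤ bC i) (hbD : ∀ i, 1 ≤ bD i)
    (hCbd : ∀ i, bC i ≤ dC i) (hDbd : ∀ i, bD i ≤ dD i)
    (W : ℝ)  -- the bottleneck distance `W∞(C, D)`
    (hmatch : ∀ i, max |bC i - bD i| |dC i - dD i| ≤ W)
    (M : ℝ)
    (hM : M = Finset.univ.sup' ⟨⟨0, hn⟩, Finset.mem_univ _⟩ fun i => max (dC i) (dD i)) :
    (Finset.univ.sup' ⟨⟨0, hn⟩, Finset.mem_univ _⟩ fun i =>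
        |dC i / bC i - dD i / bD i|) ≤ (1 + M) * W :=
  multiplicative_life_stability_general n hn bC dC bD dD hbC hbD hDbd W hmatch M hM
end

section
/- The life function ψ(b,d) = d − b satisfies |(d₁−b₁) − (d₂−b₂)| ≤ 2·max{|b₁−b₂|, |d₁−d₂|} for any two points; hence under an optimal bottleneck matching, maxᵢ |ψᵢ^C − ψᵢ^D| ≤ 2·W∞(C,D), so the life curve P(D, d−b, Σ) satisfies the Lipschitz-type bound ‖P(C) − P(D)‖₁ ≤ min{2L^C + 2Ψ^D, 2L^D + 2Ψ^C}·W∞(C,D). -/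
open MeasureTheory Set Finset


lemma ind_integrable (a b : ℝ) : Integrable ((Ico a b).indicator (1 : ℝ → ℝ)) := by
  rw [integrable_indicator_iff measurableSet_Ico]
  exact integrableOn_const measure_Ico_lt_top.ne

lemma ind_integral (a b : ℝ) (h : a ≤ b) :
    ∫ t, (Ico a b).indicator (1 : ℝ → ℝ) t = b - a := by
  rw [integral_indicator measurableSet_Ico]
  simp [Real.volume_Ico, ENNReal.toReal_ofReal (by linarith : (0:ℝ) ≤ b - a)]
  exact h

lemma ptwise (b1 d1 b2 d2 t : ℝ) :
    |(Ico b1 d1).indicator (1 : ℝ → ℝ) t - (Ico b2 d2).indicator 1 t| ≤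
      (Ico (min b1 b2) (max b1 b2)).indicator 1 t
        + (Ico (min d1 d2) (max d1 d2)).indicator 1 t := by
  have h0 : ∀ s : Set ℝ, 0 ≤ s.indicator (1 : ℝ → ℝ) t := fun s =>
    Set.indicator_nonneg (fun _ _ => zero_le_one) t
  by_cases hA : t ∈ Ico b1 d1 <;> by_cases hB : t ∈ Ico b2 d2
  · simp only [Set.indicator_of_mem hA, Set.indicator_of_mem hB, Pi.one_apply,
      sub_self, abs_zero]
    exact add_nonneg (h0 _) (h0 _)
  · obtain ⟨ha1, ha2⟩ := Set.mem_Ico.mp hA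
    rcases not_and_or.mp ((Set.mem_Ico).not.mp hB) with h | h <;> push_neg at h
    · have hm : t ∈ Ico (min b1 b2) (max b1 b2) :=
        Set.mem_Ico.mpr ⟨le_trans (min_le_left _ _) ha1, lt_of_lt_of_le h (le_max_right _ _)⟩
      simp only [Set.indicator_of_mem hA, Set.indicator_of_notMem hB,
        Set.indicator_of_mem hm, Pi.one_apply, sub_zero, abs_one]
      linarith [h0 (Ico (min d1 d2) (max d1 d2))]
    · have hm : t ∈ Ico (min d1 d2) (max d1 d2) :=
        Set.mem_Ico.mpr ⟨le_trans (min_le_right _ _) h, lt_of_lt_of_le ha2 (le_max_left _ _)⟩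
      simp only [Set.indicator_of_mem hA, Set.indicator_of_notMem hB,
        Set.indicator_of_mem hm, Pi.one_apply, sub_zero, abs_one]
      linarith [h0 (Ico (min b1 b2) (max b1 b2))]
  · obtain ⟨hb1, hb2⟩ := Set.mem_Ico.mp hB
    rcases not_and_or.mp ((Set.mem_Ico).not.mp hA) with h | h <;> push_neg at h
    · have hm : t ∈ Ico (min b1 b2) (max b1 b2) :=
        Set.mem_Ico.mpr ⟨le_trans (min_le_right _ _) hb1, lt_of_lt_of_le h (le_max_left _ _)⟩
      simp only [Set.indicator_of_mem hB, Set.indicator_of_notMem hA,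
        Set.indicator_of_mem hm, Pi.one_apply, zero_sub, abs_neg, abs_one]
      linarith [h0 (Ico (min d1 d2) (max d1 d2))]
    · have hm : t ∈ Ico (min d1 d2) (max d1 d2) :=
        Set.mem_Ico.mpr ⟨le_trans (min_le_left _ _) h, lt_of_lt_of_le hb2 (le_max_right _ _)⟩
      simp only [Set.indicator_of_mem hB, Set.indicator_of_notMem hA,
        Set.indicator_of_mem hm, Pi.one_apply, zero_sub, abs_neg, abs_one]
      linarith [h0 (Ico (min b1 b2) (max b1 b2))]
  · simp only [Set.indicator_of_notMem hA, Set.indicator_of_notMem hB,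
      sub_self, abs_zero]
    exact add_nonneg (h0 _) (h0 _)

lemma single_bound (b1 d1 b2 d2 W : ℝ) (h1 : b1 ≤ d1) (h2 : b2 ≤ d2)
    (hb : |b1 - b2| ≤ W) (hd : |d1 - d2| ≤ W) :
    ∫ t, |(d1 - b1) * (Ico b1 d1).indicator 1 t
            - (d2 - b2) * (Ico b2 d2).indicator 1 t|
      ≤ 2 * W * ((d1 - b1) + (d2 - b2)) := by
  set l1 := d1 - b1 with hl1
  set l2 := d2 - b2 with hl2
  have hl1n : 0 ≤ l1 := by simp [hl1]; linarith
  have hl2n : 0 ≤ l2 := by simp [hl2]; linarith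
  have key : ∀ t, |l1 * (Ico b1 d1).indicator 1 t - l2 * (Ico b2 d2).indicator 1 t|
      ≤ |l1 - l2| * (Ico b1 d1).indicator 1 t
        + l2 * (Ico (min b1 b2) (max b1 b2)).indicator 1 t
        + l2 * (Ico (min d1 d2) (max d1 d2)).indicator 1 t := by
    intro t
    have e : l1 * (Ico b1 d1).indicator (1:ℝ→ℝ) t - l2 * (Ico b2 d2).indicator 1 t
        = (l1 - l2) * (Ico b1 d1).indicator 1 t
          + l2 * ((Ico b1 d1).indicator 1 t - (Ico b2 d2).indicator 1 t) := by ring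
    rw [e]
    refine (abs_add_le _ _).trans ?_
    have habs : |(Ico b1 d1).indicator (1:ℝ→ℝ) t| = (Ico b1 d1).indicator 1 t :=
      abs_of_nonneg (Set.indicator_nonneg (fun _ _ => zero_le_one) t)
    rw [abs_mul, abs_mul, habs, abs_of_nonneg hl2n]
    have := mul_le_mul_of_nonneg_left (ptwise b1 d1 b2 d2 t) hl2n
    linarith
  have i1 : Integrable fun t => |l1 - l2| * (Ico b1 d1).indicator (1:ℝ→ℝ) t :=
    (ind_integrable b1 d1).const_mul _
  have i2 : Integrable fun t => l2 * (Ico (min b1 b2) (max b1 b2)).indicator (1:ℝ→ℝ) t :=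
    (ind_integrable _ _).const_mul _
  have i3 : Integrable fun t => l2 * (Ico (min d1 d2) (max d1 d2)).indicator (1:ℝ→ℝ) t :=
    (ind_integrable _ _).const_mul _
  have iL : Integrable fun t => |l1 * (Ico b1 d1).indicator (1:ℝ→ℝ) t
      - l2 * (Ico b2 d2).indicator 1 t| :=
    (((ind_integrable b1 d1).const_mul l1).sub ((ind_integrable b2 d2).const_mul l2)).abs
  calc ∫ t, |l1 * (Ico b1 d1).indicator 1 t - l2 * (Ico b2 d2).indicator 1 t|
      ≤ ∫ t, (|l1 - l2| * (Ico b1 d1).indicator 1 t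
          + l2 * (Ico (min b1 b2) (max b1 b2)).indicator 1 t
          + l2 * (Ico (min d1 d2) (max d1 d2)).indicator 1 t) :=
        integral_mono iL ((i1.add i2).add i3) key
    _ = |l1 - l2| * l1 + l2 * |b1 - b2| + l2 * |d1 - d2| := by
        have i12 : Integrable (fun t => |l1 - l2| * (Ico b1 d1).indicator (1:ℝ→ℝ) t
            + l2 * (Ico (min b1 b2) (max b1 b2)).indicator (1:ℝ→ℝ) t) := i1.add i2
        rw [integral_add i12 i3, integral_add i1 i2, integral_const_mul,
          integral_const_mul, integral_const_mul, ind_integral _ _ h1,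
          ind_integral _ _ (min_le_max), ind_integral _ _ (min_le_max),
          max_sub_min_eq_abs, max_sub_min_eq_abs, abs_sub_comm b2 b1,
          abs_sub_comm d2 d1, ← hl1]
    _ ≤ 2 * W * (l1 + l2) := by
        have h12 : |l1 - l2| ≤ |b1 - b2| + |d1 - d2| := by
          have h := abs_add_le (d1 - d2) (-(b1 - b2))
          rw [abs_neg] at h
          have e : l1 - l2 = (d1 - d2) + -(b1 - b2) := by rw [hl1, hl2]; ring
          rw [e]; linarith
        nlinarith [abs_nonneg (l1 - l2), abs_nonneg (b1 - b2), abs_nonneg (d1 - d2)]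
/-- The life function `ψ(b,d) = d − b` satisfies
`|(d₁−b₁) − (d₂−b₂)| ≤ 2·max{|b₁−b₂|, |d₁−d₂|}`; hence under an optimal
bottleneck matching with cost `W`, `maxᵢ |ψᵢ^C − ψᵢ^D| ≤ 2·W∞(C,D)`, and the
life curve `P(D, d−b, Σ)` satisfies
`‖P(C) − P(D)‖₁ ≤ min{2L^C + 2Ψ^D, 2L^D + 2Ψ^C}·W∞(C,D)` (with `Ψ = L`). -/
theorem life_curve_stability (n : ℕ) (hn : 0 < n)
    (bC dC bD dD : Fin n → ℝ)
    (hCbd : ∀ i, bC i ≤ dC i) (hDbd : ∀ i, bD i ≤ dD i)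
    (W : ℝ)  -- the bottleneck distance `W∞(C, D)`
    (hmatch : ∀ i, max |bC i - bD i| |dC i - dD i| ≤ W)
    (PC PD : ℝ → ℝ)
    (hPC : PC = fun t => ∑ i, (dC i - bC i) * (Set.Ico (bC i) (dC i)).indicator 1 t)
    (hPD : PD = fun t => ∑ i, (dD i - bD i) * (Set.Ico (bD i) (dD i)).indicator 1 t)
    (LC LD : ℝ)
    (hLC : LC = ∑ i, (dC i - bC i)) (hLD : LD = ∑ i, (dD i - bD i)) :
    (∀ b₁ d₁ b₂ d₂ : ℝ,
        |(d₁ - b₁) - (d₂ - b₂)| ≤ 2 * max |b₁ - b₂| |d₁ - d₂|) ∧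
    (Finset.univ.sup' ⟨⟨0, hn⟩, Finset.mem_univ _⟩ fun i =>
        |(dC i - bC i) - (dD i - bD i)|) ≤ 2 * W ∧
    (∫ t : ℝ, |PC t - PD t|) ≤ min (2 * LC + 2 * LD) (2 * LD + 2 * LC) * W := by
  have part1 : ∀ b₁ d₁ b₂ d₂ : ℝ,
      |(d₁ - b₁) - (d₂ - b₂)| ≤ 2 * max |b₁ - b₂| |d₁ - d₂| := by
    intro b₁ d₁ b₂ d₂
    have h := abs_add_le (d₁ - d₂) (-(b₁ - b₂))
    rw [abs_neg] at h
    have e : (d₁ - b₁) - (d₂ - b₂) = (d₁ - d₂) + -(b₁ - b₂) := by ring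
    rw [e]
    have h1 := le_max_left |b₁ - b₂| |d₁ - d₂|
    have h2 := le_max_right |b₁ - b₂| |d₁ - d₂|
    linarith
  refine ⟨part1, ?_, ?_⟩
  · apply Finset.sup'_le
    intro i _
    calc |(dC i - bC i) - (dD i - bD i)|
        ≤ 2 * max |bC i - bD i| |dC i - dD i| := part1 _ _ _ _
      _ ≤ 2 * W := by linarith [hmatch i]
  · have hmin : min (2 * LC + 2 * LD) (2 * LD + 2 * LC) = 2 * LC + 2 * LD := by
      rw [add_comm (2 * LD)]; exact min_self _
    rw [hmin, hPC, hPD]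
    have hbW : ∀ i, |bC i - bD i| ≤ W := fun i => (le_max_left _ _).trans (hmatch i)
    have hdW : ∀ i, |dC i - dD i| ≤ W := fun i => (le_max_right _ _).trans (hmatch i)
    have iterm : ∀ i : Fin n, Integrable (fun t =>
        |(dC i - bC i) * (Ico (bC i) (dC i)).indicator (1:ℝ→ℝ) t
          - (dD i - bD i) * (Ico (bD i) (dD i)).indicator 1 t|) :=
      fun i => (((ind_integrable _ _).const_mul _).sub
        ((ind_integrable _ _).const_mul _)).abs
    have iC : Integrable (fun t => ∑ i,
        (dC i - bC i) * (Ico (bC i) (dC i)).indicator (1:ℝ→ℝ) t) :=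
      integrable_finset_sum _ (fun i _ => (ind_integrable _ _).const_mul _)
    have iD : Integrable (fun t => ∑ i,
        (dD i - bD i) * (Ico (bD i) (dD i)).indicator (1:ℝ→ℝ) t) :=
      integrable_finset_sum _ (fun i _ => (ind_integrable _ _).const_mul _)
    calc (∫ t : ℝ, |(∑ i, (dC i - bC i) * (Ico (bC i) (dC i)).indicator 1 t)
            - ∑ i, (dD i - bD i) * (Ico (bD i) (dD i)).indicator 1 t|)
        ≤ ∫ t : ℝ, ∑ i, |(dC i - bC i) * (Ico (bC i) (dC i)).indicator 1 t
            - (dD i - bD i) * (Ico (bD i) (dD i)).indicator 1 t| := by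
          refine integral_mono (iC.sub iD).abs
            (integrable_finset_sum _ (fun i _ => iterm i)) (fun t => ?_)
          rw [← Finset.sum_sub_distrib]
          exact Finset.abs_sum_le_sum_abs _ _
      _ = ∑ i, ∫ t : ℝ, |(dC i - bC i) * (Ico (bC i) (dC i)).indicator 1 t
            - (dD i - bD i) * (Ico (bD i) (dD i)).indicator 1 t| :=
          integral_finset_sum _ (fun i _ => iterm i)
      _ ≤ ∑ i, 2 * W * ((dC i - bC i) + (dD i - bD i)) :=
          Finset.sum_le_sum (fun i _ =>
            single_bound _ _ _ _ _ (hCbd i) (hDbd i) (hbW i) (hdW i))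
      _ = (2 * LC + 2 * LD) * W := by
          rw [hLC, hLD, ← Finset.mul_sum, Finset.sum_add_distrib]
          ring
end
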